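/- Let C be a connected configuration, let P = P(x,y,z_b,z_t) be a non-cut pillar of C, and let P' = P'(x',y',z'_b,z'_t) be an adjacent pillar of P with z'_b > z_b such that (x,y,z'_b−1) is not a cut cube of C. Then there is a sequence of at most 3 moves, each resulting in a connected configuration, transforming C into a configuration C' with Z_{C'} = Z_C − 1; moreover, if C is nonnegative then so is C'. -/

import Mathlib

/-- A cube is a point of `ℤ³`. -/
abbrev Cube : Type := ℤ × ℤ × ℤ

/-- Two cubes are adjacent if they lie at `L1`-distance `1`. -/
def cubeAdj (a b : Cube) : Prop :=
  (a.1 - b.1).natAbs + (a.2.1 - b.2.1).natAbs + (a.2.2 - b.2.2).natAbs = 1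

lemma cubeAdj_symm {a b : Cube} (h : cubeAdj a b) : cubeAdj b a := by
  unfold cubeAdj at h ⊢
  omega

lemma cubeAdj_irrefl (a : Cube) : ¬ cubeAdj a a := by
  unfold cubeAdj; simp

/-- The graph `G_S` on a set of cubes `S`, connecting adjacent cubes of `S`. -/
def gph (S : Finset Cube) : SimpleGraph Cube where
  Adj a b := a ∈ S ∧ b ∈ S ∧ cubeAdj a b
  symm := ⟨by
    rintro a b ⟨ha, hb, h⟩
    exact ⟨hb, ha, cubeAdj_symm h⟩⟩
  loopless := ⟨by
    rintro a ⟨-, -, h⟩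
    exact cubeAdj_irrefl a h⟩

/-- A set of cubes is connected if it is nonempty and all its cubes are joined by
paths of adjacent cubes inside the set. -/
def Conn (S : Finset Cube) : Prop :=
  S.Nonempty ∧ ∀ a ∈ S, ∀ b ∈ S, (gph S).Reachable a b

/-- Connected or empty. -/
def ConnOrEmpty (S : Finset Cube) : Prop := S = ∅ ∨ Conn S

/-- A configuration is nonnegative if all coordinates of all its cubes are `≥ 0`. -/
def Nonneg (C : Finset Cube) : Prop := ∀ c ∈ C, 0 ≤ c.1 ∧ 0 ≤ c.2.1 ∧ 0 ≤ c.2.2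

/-- `Sq4 p q r s` : the four points form a 4-cycle `p-q-r-s-p` in the unit-distance
graph on `ℤ³`. -/
def Sq4 (p q r s : Cube) : Prop :=
  cubeAdj p q ∧ cubeAdj q r ∧ cubeAdj r s ∧ cubeAdj s p ∧ p ≠ r ∧ q ≠ s

/-- Slide: there is a 4-cycle `c, c', r, s` with exactly the three vertices
other than `c'` in `C` (and `c` adjacent to `c'`). -/
def IsSlide (C : Finset Cube) (c c' : Cube) : Prop :=
  c ∈ C ∧ c' ∉ C ∧ ∃ r s, Sq4 c c' r s ∧ r ∈ C ∧ s ∈ C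

/-- Convex transition: there is a 4-cycle `c, q, c', s` with exactly two
(adjacent) vertices in `C`, one of them `c`, and `c'` opposite to `c`. -/
def IsConvexTrans (C : Finset Cube) (c c' : Cube) : Prop :=
  c ∈ C ∧ c' ∉ C ∧ ∃ q s, Sq4 c q c' s ∧ ((q ∈ C ∧ s ∉ C) ∨ (s ∈ C ∧ q ∉ C))

/-- A move replaces `c ∈ C` by `c' ∉ C` via a slide or a convex transition,
such that `C \ {c}` is connected. -/
def IsMoveVia (C : Finset Cube) (c c' : Cube) : Prop :=
  (IsSlide C c c' ∨ IsConvexTrans C c c') ∧ Conn (C.erase c)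

/-- `C'` is obtained from `C` by a single move. -/
def MoveStep (C C' : Finset Cube) : Prop :=
  ∃ c c', IsMoveVia C c c' ∧ C' = insert c' (C.erase c)

/-- `MoveSeq C m C'` : a sequence of `m` moves from `C` to `C'`, each resulting in a
connected configuration. -/
def MoveSeq (C : Finset Cube) (m : ℕ) (C' : Finset Cube) : Prop :=
  ∃ f : ℕ → Finset Cube, f 0 = C ∧ f m = C' ∧
    ∀ i < m, MoveStep (f i) (f (i + 1)) ∧ Conn (f (i + 1))

/-- Sum of `x`-coordinates of `C`. -/
def Xsum (C : Finset Cube) : ℤ := ∑ c ∈ C, c.1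

/-- Sum of `y`-coordinates of `C`. -/
def Ysum (C : Finset Cube) : ℤ := ∑ c ∈ C, c.2.1

/-- Sum of `z`-coordinates of `C`. -/
def Zsum (C : Finset Cube) : ℤ := ∑ c ∈ C, c.2.2

/-- A cube `c` is finished in `C` if the whole box spanned by the origin and `c`
is contained in `C`. -/
def FinishedCube (C : Finset Cube) (c : Cube) : Prop :=
  ∀ p : Cube, 0 ≤ p.1 → p.1 ≤ c.1 → 0 ≤ p.2.1 → p.2.1 ≤ c.2.1 →
    0 ≤ p.2.2 → p.2.2 ≤ c.2.2 → p ∈ C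

/-- A finished configuration: nonnegative and all cubes finished. -/
def FinishedConfig (C : Finset Cube) : Prop :=
  Nonneg C ∧ ∀ c ∈ C, FinishedCube C c

/-- The weight of a cube. -/
def weight (c : Cube) : ℤ :=
  if 1 < c.2.2 then 5
  else if c.2.2 = 1 then 4
  else if 1 < c.2.1 then 3
  else if c.2.1 = 1 then 2
  else 1

/-- The potential of a cube `(x, y, z)` is `w • (x + 2y + 4z)`. -/
def pot (c : Cube) : ℤ := weight c * (c.1 + 2 * c.2.1 + 4 * c.2.2)

/-- The potential of a configuration. -/
def Pot (C : Finset Cube) : ℤ := ∑ c ∈ C, pot c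

/-- `SafeSeq C K` : `C` admits a sequence of `m ≥ 1` moves, each resulting in a connected
configuration, ending in a nonnegative configuration `C'` of strictly smaller potential,
with `m ≤ K • (Π_C - Π_{C'})`. -/
def SafeSeq (C : Finset Cube) (K : ℕ) : Prop :=
  ∃ (m : ℕ) (C' : Finset Cube), 1 ≤ m ∧ MoveSeq C m C' ∧ Nonneg C' ∧
    Pot C' < Pot C ∧ (m : ℤ) ≤ (K : ℤ) * (Pot C - Pot C')

/-- The set of cubes `{x} × {y} × {z_b, …, z_t}`. -/
noncomputable def pillarSet (x y zb zt : ℤ) : Finset Cube :=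
  (Finset.Icc zb zt).image fun z => (x, y, z)

/-- `P(x,y,z_b,z_t)` is a subpillar of `S`. -/
def IsSubpillar (S : Finset Cube) (x y zb zt : ℤ) : Prop :=
  zb ≤ zt ∧ pillarSet x y zb zt ⊆ S

/-- A pillar of `S`: a maximal subpillar. -/
def IsPillar (S : Finset Cube) (x y zb zt : ℤ) : Prop :=
  IsSubpillar S x y zb zt ∧ (x, y, zb - 1) ∉ S ∧ (x, y, zt + 1) ∉ S

/-- `(x', y')` is one of the four sides of the column `(x, y)`. -/
def IsSide (x y x' y' : ℤ) : Prop :=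
  (x' = x - 1 ∧ y' = y) ∨ (x' = x + 1 ∧ y' = y) ∨
  (x' = x ∧ y' = y - 1) ∨ (x' = x ∧ y' = y + 1)

/-- `P'(x',y',z'_b,z'_t)` is a pillar of `C` lying on a side of `P(x,y,z_b,z_t)`
and adjacent to it. -/
def AdjPillar (C : Finset Cube) (x y zb zt x' y' z'b z't : ℤ) : Prop :=
  IsPillar C x' y' z'b z't ∧ IsSide x y x' y' ∧ z'b ≤ zt ∧ zb ≤ z't

/-- A cut cube of `C`: a cube whose removal disconnects `C`. -/
def IsCutCube (C : Finset Cube) (c : Cube) : Prop :=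
  c ∈ C ∧ ¬ Conn (C.erase c)

/-- Condition (a): on some side the topmost adjacent pillar
`P'` satisfies `z'_t ≤ z_t - 2`. -/
def CondA (C : Finset Cube) (x y zb zt : ℤ) : Prop :=
  ∃ x' y' z'b z't, AdjPillar C x y zb zt x' y' z'b z't ∧
    (∀ z''b z''t, AdjPillar C x y zb zt x' y' z''b z''t → z''t ≤ z't) ∧
    z't ≤ zt - 2

/-- Condition (b): some adjacent pillar `P'` has `z'_b > z_b` and
`(x, y, z'_b - 1)` is not a cut cube of `C`. -/
def CondB (C : Finset Cube) (x y zb zt : ℤ) : Prop :=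
  ∃ x' y' z'b z't, AdjPillar C x y zb zt x' y' z'b z't ∧ zb < z'b ∧
    ¬ IsCutCube C (x, y, z'b - 1)

/-- Condition (c): `(x, y, z_b - 1) ∉ C` and some adjacent pillar has `z'_b < z_b`. -/
def CondC (C : Finset Cube) (x y zb zt : ℤ) : Prop :=
  (x, y, zb - 1) ∉ C ∧
  ∃ x' y' z'b z't, AdjPillar C x y zb zt x' y' z'b z't ∧ z'b < zb

/-- Condition (d): `(x, y, z_b - 1) ∉ C` and on some side the bottommost adjacent
pillar `P'` satisfies `z'_b = z_b > 0`. -/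
def CondD (C : Finset Cube) (x y zb zt : ℤ) : Prop :=
  (x, y, zb - 1) ∉ C ∧
  ∃ x' y' z'b z't, AdjPillar C x y zb zt x' y' z'b z't ∧
    (∀ z''b z''t, AdjPillar C x y zb zt x' y' z''b z''t → z'b ≤ z''b) ∧
    z'b = zb ∧ 0 < zb

/-- Condition (e): at most one adjacent pillar on each side; there is an adjacent
pillar `P'` with `z'_b > z_b`, minimal such; and some other side `(x'', y'')` has
`(x'', y'', z_b) ∉ C`. -/
def CondE (C : Finset Cube) (x y zb zt : ℤ) : Prop :=
  (∀ x' y' z'b z't z''b z''t, AdjPillar C x y zb zt x' y' z'b z't →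
      AdjPillar C x y zb zt x' y' z''b z''t → z'b = z''b ∧ z't = z''t) ∧
  ∃ x' y' z'b z't, AdjPillar C x y zb zt x' y' z'b z't ∧ zb < z'b ∧
    (∀ x'' y'' z''b z''t, AdjPillar C x y zb zt x'' y'' z''b z''t →
      zb < z''b → z'b ≤ z''b) ∧
    ∃ x'' y'', IsSide x y x'' y'' ∧ (x'', y'') ≠ (x', y') ∧ (x'', y'', zb) ∉ C

/-- No non-cut subpillar of `C` satisfies any of the conditions (a)--(e). -/
def NoCondAE (C : Finset Cube) : Prop :=
  ∀ x y zb zt, IsSubpillar C x y zb zt →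
    ConnOrEmpty (C \ pillarSet x y zb zt) →
    ¬ (CondA C x y zb zt ∨ CondB C x y zb zt ∨ CondC C x y zb zt ∨
       CondD C x y zb zt ∨ CondE C x y zb zt)

/-- Two sets of cubes are adjacent if some cube of one is adjacent to a cube of the other. -/
def AdjSets (S T : Finset Cube) : Prop := ∃ a ∈ S, ∃ b ∈ T, cubeAdj a b

/-- The cubes of `C` with `z > 0`. -/
def Cpos (C : Finset Cube) : Finset Cube := C.filter fun c => 0 < c.2.2

/-- The cubes of `C` with `z = 0`. -/
def Czero (C : Finset Cube) : Finset Cube := C.filter fun c => c.2.2 = 0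

/-- `H` is a connected component of `G_S`: nonempty, connected and closed under
adjacency within `S`. -/
def IsCompOf (S H : Finset Cube) : Prop :=
  H ⊆ S ∧ Conn H ∧ ∀ a ∈ H, ∀ b ∈ S, cubeAdj a b → b ∈ H

/-- A high component of `C`: a connected component of `G_{C_{>0}}`. -/
def IsHighComp (C H : Finset Cube) : Prop := IsCompOf (Cpos C) H

/-- A low component of `C`: a connected component of `G_{C_0}`. -/
def IsLowComp (C L : Finset Cube) : Prop := IsCompOf (Czero C) L

/-- A move of type (f): it moves a cube with `z > 0`, strictly decreases the
potential, and results in a nonnegative configuration. -/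
def MoveTypeF (C : Finset Cube) : Prop :=
  ∃ c c', IsMoveVia C c c' ∧ 0 < c.2.2 ∧
    Nonneg (insert c' (C.erase c)) ∧ Pot (insert c' (C.erase c)) < Pot C

/-- `R` is the root: the low component containing the origin if `(0,0,0) ∈ C`,
an arbitrary low component otherwise. -/
def IsRoot (C R : Finset Cube) : Prop :=
  IsLowComp C R ∧ (((0 : ℤ), (0 : ℤ), (0 : ℤ)) ∈ C → ((0 : ℤ), (0 : ℤ), (0 : ℤ)) ∈ R)

/-- A clear low component `L` (w.r.t. root `R`): `C \ L` is connected, `L ≠ R`, and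
some pillar of `C \ L` adjacent to `L` is non-cut in `C \ L`. -/
def IsClear (C R L : Finset Cube) : Prop :=
  IsLowComp C L ∧ Conn (C \ L) ∧ L ≠ R ∧
  ∃ x y zb zt, IsPillar (C \ L) x y zb zt ∧ AdjSets (pillarSet x y zb zt) L ∧
    ConnOrEmpty ((C \ L) \ pillarSet x y zb zt)

/-- `P(x,y,z_b,z_t)` is a clearing pillar of the clear low component `L`. -/
def IsClearingPillar (C R L : Finset Cube) (x y zb zt : ℤ) : Prop :=
  IsClear C R L ∧ IsPillar (C \ L) x y zb zt ∧ AdjSets (pillarSet x y zb zt) L ∧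
    ConnOrEmpty ((C \ L) \ pillarSet x y zb zt)

/-- A move of type (g): it moves a cube of some clear low component, strictly
decreases the potential, and results in a nonnegative configuration. -/
def MoveTypeG (C R : Finset Cube) : Prop :=
  ∃ L, IsClear C R L ∧ ∃ c c', IsMoveVia C c c' ∧ c ∈ L ∧
    Nonneg (insert c' (C.erase c)) ∧ Pot (insert c' (C.erase c)) < Pot C

/-- The low-high graph `LH_C`: its vertices are the low and high components of `C`,
with edges between adjacent low and high components. -/
def LH (C : Finset Cube) : SimpleGraph (Finset Cube) where
  Adj S T := S ≠ T ∧ AdjSets S T ∧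
    ((IsLowComp C S ∧ IsHighComp C T) ∨ (IsHighComp C S ∧ IsLowComp C T))
  symm := ⟨by
    rintro S T ⟨hne, ⟨a, ha, b, hb, hab⟩, h⟩
    exact ⟨hne.symm, ⟨b, hb, a, ha, cubeAdj_symm hab⟩, h.symm.imp And.symm And.symm⟩⟩
  loopless := ⟨fun S h => h.1 rfl⟩

/-- `c` lies in the bounding box of `C`. -/
def InBBox (C : Finset Cube) (c : Cube) : Prop :=
  (∃ a ∈ C, a.1 ≤ c.1) ∧ (∃ a ∈ C, c.1 ≤ a.1) ∧
  (∃ a ∈ C, a.2.1 ≤ c.2.1) ∧ (∃ a ∈ C, c.2.1 ≤ a.2.1) ∧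
  (∃ a ∈ C, a.2.2 ≤ c.2.2) ∧ (∃ a ∈ C, c.2.2 ≤ a.2.2)

/-! ### Auxiliary lemmas for `move_type_b` -/

lemma mem_pillarSet {x y a b : ℤ} {c : Cube} :
    c ∈ pillarSet x y a b ↔ c.1 = x ∧ c.2.1 = y ∧ a ≤ c.2.2 ∧ c.2.2 ≤ b := by
  constructor
  · intro h
    simp only [pillarSet, Finset.mem_image, Finset.mem_Icc] at h
    obtain ⟨z, hz, rfl⟩ := h
    exact ⟨rfl, rfl, hz.1, hz.2⟩
  · rintro ⟨h1, h2, h3, h4⟩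
    simp only [pillarSet, Finset.mem_image, Finset.mem_Icc]
    exact ⟨c.2.2, ⟨h3, h4⟩, by rw [← h1, ← h2]⟩

lemma gph_mono {S T : Finset Cube} (h : S ⊆ T) : gph S ≤ gph T := by
  intro a b hab
  exact ⟨h hab.1, h hab.2.1, hab.2.2⟩

lemma reach_mono {S T : Finset Cube} (h : S ⊆ T) {a b : Cube}
    (hr : (gph S).Reachable a b) : (gph T).Reachable a b :=
  hr.mono (gph_mono h)

lemma conn_insert {S : Finset Cube} (hS : Conn S) {a b : Cube} (hb : b ∈ S)
    (hadj : cubeAdj a b) : Conn (insert a S) := by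
  obtain ⟨hne, hreach⟩ := hS
  have key : ∀ c ∈ insert a S, (gph (insert a S)).Reachable c b := by
    intro c hc
    rcases Finset.mem_insert.mp hc with rfl | hc
    · exact SimpleGraph.Adj.reachable ⟨Finset.mem_insert_self _ _, Finset.mem_insert_of_mem hb, hadj⟩
    · exact reach_mono (Finset.subset_insert _ _) (hreach c hc b hb)
  exact ⟨⟨b, Finset.mem_insert_of_mem hb⟩,
    fun c hc d hd => (key c hc).trans (key d hd).symm⟩

lemma adj_vert {w w' : ℤ} (x y : ℤ) (h : (w - w').natAbs = 1) :
    cubeAdj (x, y, w) (x, y, w') := by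
  unfold cubeAdj; simpa using h

lemma mk_mem_pillarSet {x y a b z : ℤ} (h1 : a ≤ z) (h2 : z ≤ b) :
    ((x, y, z) : Cube) ∈ pillarSet x y a b :=
  mem_pillarSet.mpr ⟨rfl, rfl, h1, h2⟩

lemma pillar_reach_bot (x y a b : ℤ) :
    ∀ z, a ≤ z → z ≤ b → (gph (pillarSet x y a b)).Reachable (x, y, z) (x, y, a) := by
  have key : ∀ k : ℕ, ∀ z, z = a + k → z ≤ b →
      (gph (pillarSet x y a b)).Reachable (x, y, z) (x, y, a) := by
    intro k
    induction k with
    | zero => intro z hz _; rw [show z = a by omega]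
    | succ n ih =>
      intro z hz hzb
      have h1 : ((x, y, z) : Cube) ∈ pillarSet x y a b := mk_mem_pillarSet (by omega) hzb
      have h2 : ((x, y, z - 1) : Cube) ∈ pillarSet x y a b := mk_mem_pillarSet (by omega) (by omega)
      have hadj : (gph (pillarSet x y a b)).Adj (x, y, z) (x, y, z - 1) :=
        ⟨h1, h2, adj_vert x y (by omega)⟩
      exact hadj.reachable.trans (ih (z - 1) (by omega) (by omega))
  intro z h1 h2
  exact key (z - a).toNat z (by omega) h2

lemma conn_pillar {x y a b : ℤ} (h : a ≤ b) : Conn (pillarSet x y a b) := by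
  refine ⟨⟨(x, y, a), mem_pillarSet.mpr ⟨rfl, rfl, le_refl _, h⟩⟩, ?_⟩
  intro c hc d hd
  obtain ⟨hc1, hc2, hc3, hc4⟩ := mem_pillarSet.mp hc
  obtain ⟨hd1, hd2, hd3, hd4⟩ := mem_pillarSet.mp hd
  have hc' : c = (x, y, c.2.2) := by
    rw [← hc1, ← hc2]
  have hd' : d = (x, y, d.2.2) := by
    rw [← hd1, ← hd2]
  rw [hc', hd']
  exact (pillar_reach_bot x y a b _ hc3 hc4).trans (pillar_reach_bot x y a b _ hd3 hd4).symm

lemma exit_walk {S X : Finset Cube} {a c : Cube} (w : (gph S).Walk a c) :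
    a ∈ X → c ∉ X → ∃ p ∈ X, ∃ q ∈ S, q ∉ X ∧ cubeAdj p q := by
  induction w with
  | nil => intro h h'; exact absurd h h'
  | @cons u v _ h p ih =>
    intro ha hc
    by_cases hv : v ∈ X
    · exact ih hv hc
    · exact ⟨u, ha, v, h.2.1, hv, h.2.2⟩

lemma erase_leaf_walk {S : Finset Cube} {t b : Cube} (hb : b ∈ S) (hbt : b ≠ t)
    (huniq : ∀ a ∈ S, cubeAdj a t → a = b) {a c : Cube} (w : (gph S).Walk a c) :
    c ≠ t → (gph (S.erase t)).Reachable (if a = t then b else a) c := by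
  induction w with
  | nil =>
    intro hc
    rw [if_neg hc]
  | @cons u v _ h p ih =>
    intro hc
    have hr := ih hc
    by_cases hu : u = t
    · have hv : v = b := huniq v h.2.1 (by rw [← hu]; exact cubeAdj_symm h.2.2)
      rw [if_neg (hv ▸ hbt)] at hr
      rw [if_pos hu, ← hv]
      exact hr
    · rw [if_neg hu]
      by_cases hv : v = t
      · have hu' : u = b := huniq u h.1 (hv ▸ h.2.2)
        rw [if_pos hv] at hr
        rw [hu']
        exact hr
      · rw [if_neg hv] at hr
        refine (SimpleGraph.Adj.reachable ?_).trans hr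
        exact ⟨Finset.mem_erase.mpr ⟨hu, h.1⟩, Finset.mem_erase.mpr ⟨hv, h.2.1⟩, h.2.2⟩

lemma erase_leaf {S : Finset Cube} (hS : Conn S) {t b : Cube} (ht : t ∈ S) (hb : b ∈ S)
    (hbt : b ≠ t) (huniq : ∀ a ∈ S, cubeAdj a t → a = b) : Conn (S.erase t) := by
  refine ⟨⟨b, Finset.mem_erase.mpr ⟨hbt, hb⟩⟩, ?_⟩
  intro a ha c hc
  obtain ⟨hat, haS⟩ := Finset.mem_erase.mp ha
  obtain ⟨hct, hcS⟩ := Finset.mem_erase.mp hc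
  obtain ⟨w⟩ := hS.2 a haS c hcS
  have := erase_leaf_walk hb hbt huniq w hct
  rwa [if_neg hat] at this

lemma zsum_move {S : Finset Cube} {c c' : Cube} (hc : c ∈ S) (hc' : c' ∉ S) :
    Zsum (insert c' (S.erase c)) = Zsum S + c'.2.2 - c.2.2 := by
  unfold Zsum
  rw [Finset.sum_insert (fun h => hc' (Finset.mem_of_mem_erase h)),
    ← Finset.sum_erase_add S (fun a : Cube => a.2.2) hc]
  ring

lemma nonneg_move {S : Finset Cube} {c c' : Cube} (h : Nonneg S)
    (h' : 0 ≤ c'.1 ∧ 0 ≤ c'.2.1 ∧ 0 ≤ c'.2.2) : Nonneg (insert c' (S.erase c)) := by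
  intro a ha
  rcases Finset.mem_insert.mp ha with rfl | ha
  · exact h'
  · exact h a (Finset.mem_of_mem_erase ha)

lemma moveSeq_single {C C1 : Finset Cube} (h : MoveStep C C1) (hc : Conn C1) :
    MoveSeq C 1 C1 := by
  refine ⟨fun i => match i with | 0 => C | _ + 1 => C1, rfl, rfl, ?_⟩
  intro i hi
  interval_cases i
  exact ⟨h, hc⟩

lemma moveSeq_cons {C C1 C2 : Finset Cube} {m : ℕ} (h : MoveStep C C1) (hc : Conn C1)
    (hs : MoveSeq C1 m C2) : MoveSeq C (m + 1) C2 := by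
  obtain ⟨f, hf0, hfm, hf⟩ := hs
  refine ⟨fun i => match i with | 0 => C | j + 1 => f j, rfl, hfm, ?_⟩
  intro i hi
  match i with
  | 0 => simpa [hf0] using ⟨h, hf0 ▸ hc⟩
  | j + 1 => exact hf j (by omega)

lemma mem_pillarSet' {x y a b px py pz : ℤ} :
    ((px, py, pz) : Cube) ∈ pillarSet x y a b ↔ px = x ∧ py = y ∧ a ≤ pz ∧ pz ≤ b :=
  mem_pillarSet

lemma cube_eq_lit {c : Cube} {a b e : ℤ} :
    c = (a, b, e) ↔ c.1 = a ∧ c.2.1 = b ∧ c.2.2 = e := by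
  constructor
  · rintro rfl; exact ⟨rfl, rfl, rfl⟩
  · rintro ⟨h1, h2, h3⟩; rw [← h1, ← h2, ← h3]

lemma cube_lit_eq_iff {a b c d e f : ℤ} :
    ((a, b, c) : Cube) = (d, e, f) ↔ a = d ∧ b = e ∧ c = f :=
  cube_eq_lit

lemma cube_ne_lit {a b c d e f : ℤ} (h : ¬(a = d ∧ b = e ∧ c = f)) :
    ((a, b, c) : Cube) ≠ (d, e, f) :=
  fun he => h (cube_lit_eq_iff.mp he)

lemma cubeAdj_lit {a b c d e f : ℤ} :
    cubeAdj (a, b, c) (d, e, f) ↔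
      (a - d).natAbs + (b - e).natAbs + (c - f).natAbs = 1 :=
  Iff.rfl

lemma pillarSet_mono {x y a b a' b' : ℤ} (h1 : a ≤ a') (h2 : b' ≤ b) :
    pillarSet x y a' b' ⊆ pillarSet x y a b := by
  intro c hc
  obtain ⟨e1, e2, e3, e4⟩ := mem_pillarSet.mp hc
  exact mem_pillarSet.mpr ⟨e1, e2, by omega, by omega⟩

lemma zsum_move' {S : Finset Cube} {a b c d e f : ℤ} (hc : ((a, b, c) : Cube) ∈ S)
    (hd : ((d, e, f) : Cube) ∉ S) :
    Zsum (insert ((d, e, f) : Cube) (S.erase (a, b, c))) = Zsum S + f - c :=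
  zsum_move hc hd

lemma nonneg_move' {S : Finset Cube} {c : Cube} {d e f : ℤ} (h : Nonneg S)
    (h1 : 0 ≤ d) (h2 : 0 ≤ e) (h3 : 0 ≤ f) :
    Nonneg (insert ((d, e, f) : Cube) (S.erase c)) :=
  nonneg_move h ⟨h1, h2, h3⟩
/-- move (b): if a non-cut pillar `P` has an adjacent pillar `P'`
with `z'_b > z_b` such that `(x, y, z'_b - 1)` is not a cut cube of `C`, then at most
`3` moves, each resulting in a connected configuration, decrease the sum of
`z`-coordinates by one, preserving nonnegativity. -/
theorem move_type_b (C : Finset Cube) (hC : Conn C)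
    (x y zb zt : ℤ) (hP : IsPillar C x y zb zt)
    (hnc : ConnOrEmpty (C \ pillarSet x y zb zt))
    (x' y' z'b z't : ℤ) (hadj : AdjPillar C x y zb zt x' y' z'b z't)
    (hgt : zb < z'b) (hcut : ¬ IsCutCube C (x, y, z'b - 1)) :
    ∃ (m : ℕ) (C' : Finset Cube), m ≤ 3 ∧ MoveSeq C m C' ∧
      Zsum C' = Zsum C - 1 ∧ (Nonneg C → Nonneg C') := by
  obtain ⟨⟨hble, hPsub⟩, hPbot, hPtop⟩ := hP
  obtain ⟨⟨⟨h'ble, hP'sub⟩, hP'bot, hP'top⟩, hside, hlap1, hlap2⟩ := hadj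
  have hs : (x - x').natAbs + (y - y').natAbs = 1 := by
    rcases hside with ⟨h1, h2⟩ | ⟨h1, h2⟩ | ⟨h1, h2⟩ | ⟨h1, h2⟩ <;> omega
  have hA : ((x, y, z'b - 1) : Cube) ∈ C := hPsub (mk_mem_pillarSet (by omega) (by omega))
  have hB : ((x, y, z'b) : Cube) ∈ C := hPsub (mk_mem_pillarSet (by omega) hlap1)
  have hB' : ((x', y', z'b) : Cube) ∈ C := hP'sub (mk_mem_pillarSet le_rfl h'ble)
  have hA'n : ((x', y', z'b - 1) : Cube) ∉ C := hP'bot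
  have hBzb : ((x, y, zb) : Cube) ∈ C := hPsub (mk_mem_pillarSet le_rfl hble)
  have hT : ((x, y, zt) : Cube) ∈ C := hPsub (mk_mem_pillarSet hble le_rfl)
  have hAP : ((x, y, z'b - 1) : Cube) ∈ pillarSet x y zb zt :=
    mk_mem_pillarSet (by omega) (by omega)
  have hBP : ((x, y, z'b) : Cube) ∈ pillarSet x y zb zt := mk_mem_pillarSet (by omega) hlap1
  have hTP : ((x, y, zt) : Cube) ∈ pillarSet x y zb zt := mk_mem_pillarSet hble le_rfl
  have hconnA : Conn (C.erase (x, y, z'b - 1)) := by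
    by_contra h
    exact hcut ⟨hA, h⟩
  have hB'P : ((x', y', z'b) : Cube) ∉ pillarSet x y zb zt := by
    intro h
    obtain ⟨e1, e2, -⟩ := mem_pillarSet'.mp h
    omega
  have hB'Q : ((x', y', z'b) : Cube) ∈ C \ pillarSet x y zb zt :=
    Finset.mem_sdiff.mpr ⟨hB', hB'P⟩
  have hQconn : Conn (C \ pillarSet x y zb zt) := by
    rcases hnc with h | h
    · rw [h] at hB'Q; exact absurd hB'Q (Finset.notMem_empty _)
    · exact h
  -- the L-exit fact
  have hLexit : ∀ dz : ℤ, zb ≤ dz → dz ≤ z'b - 2 →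
      ∃ p ∈ pillarSet x y zb (z'b - 2), ∃ q ∈ C,
        q ∉ pillarSet x y zb zt ∧ cubeAdj p q := by
    intro dz h1 h2
    have hdC : ((x, y, dz) : Cube) ∈ C.erase (x, y, z'b - 1) :=
      Finset.mem_erase.mpr ⟨cube_ne_lit (by omega), hPsub (mk_mem_pillarSet h1 (by omega))⟩
    have hB'e : ((x', y', z'b) : Cube) ∈ C.erase (x, y, z'b - 1) :=
      Finset.mem_erase.mpr ⟨cube_ne_lit (by omega), hB'⟩
    obtain ⟨w⟩ := hconnA.2 _ hdC _ hB'e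
    obtain ⟨p, hpL, q, hqS, hqL, hpq⟩ := exit_walk w (mk_mem_pillarSet h1 h2)
      (fun h => by obtain ⟨e1, e2, -⟩ := mem_pillarSet'.mp h; omega)
    obtain ⟨hqA, hqC⟩ := Finset.mem_erase.mp hqS
    refine ⟨p, hpL, q, hqC, ?_, hpq⟩
    intro hqP
    obtain ⟨f1, f2, f3, f4⟩ := mem_pillarSet.mp hqP
    obtain ⟨g1, g2, g3, g4⟩ := mem_pillarSet.mp hpL
    have hq5 : ¬(q.2.2 ≤ z'b - 2) := fun h => hqL (mem_pillarSet.mpr ⟨f1, f2, f3, h⟩)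
    have hq6 : q.2.2 ≠ z'b - 1 := fun h => hqA (cube_eq_lit.mpr ⟨f1, f2, h⟩)
    unfold cubeAdj at hpq
    omega
  -- move 1 (shared by the first and third cases): slide (x,y,z'b-1) to (x',y',z'b-1)
  have hB'e : ((x', y', z'b) : Cube) ∈ C.erase (x, y, z'b - 1) :=
    Finset.mem_erase.mpr ⟨cube_ne_lit (by omega), hB'⟩
  have hAC1 : ((x, y, z'b - 1) : Cube) ∉
      insert ((x', y', z'b - 1) : Cube) (C.erase (x, y, z'b - 1)) := by
    rw [Finset.mem_insert]
    rintro (h | h)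
    · exact cube_ne_lit (by omega) h
    · exact (Finset.mem_erase.mp h).1 rfl
  have hstep1 : MoveStep C (insert (x', y', z'b - 1) (C.erase (x, y, z'b - 1))) := by
    refine ⟨(x, y, z'b - 1), (x', y', z'b - 1),
      ⟨Or.inl ⟨hA, hA'n, (x', y', z'b), (x, y, z'b), ?_, hB', hB⟩, hconnA⟩, rfl⟩
    exact ⟨cubeAdj_lit.mpr (by omega), cubeAdj_lit.mpr (by omega),
      cubeAdj_lit.mpr (by omega), cubeAdj_lit.mpr (by omega),
      cube_ne_lit (by omega), cube_ne_lit (by omega)⟩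
  have hC1conn : Conn (insert (x', y', z'b - 1) (C.erase (x, y, z'b - 1))) :=
    conn_insert hconnA hB'e (cubeAdj_lit.mpr (by omega))
  have hBC1 : ((x, y, z'b) : Cube) ∈
      insert ((x', y', z'b - 1) : Cube) (C.erase (x, y, z'b - 1)) :=
    Finset.mem_insert_of_mem (Finset.mem_erase.mpr ⟨cube_ne_lit (by omega), hB⟩)
  by_cases hUQ : (∃ u ∈ pillarSet x y (z'b + 1) zt, ∃ q ∈ C \ pillarSet x y zb zt,
      cubeAdj u q) ∨ zt = z'b
  · -- CASE 1 : two moves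
    have hQD : C \ pillarSet x y zb zt ⊆
        (insert ((x', y', z'b - 1) : Cube) (C.erase (x, y, z'b - 1))).erase (x, y, z'b) := by
      intro q hq
      obtain ⟨hqC, hqP⟩ := Finset.mem_sdiff.mp hq
      exact Finset.mem_erase.mpr ⟨fun h => hqP (by rw [h]; exact hBP),
        Finset.mem_insert_of_mem (Finset.mem_erase.mpr
          ⟨fun h => hqP (by rw [h]; exact hAP), hqC⟩)⟩
    have hB'D : ((x', y', z'b) : Cube) ∈
        (insert ((x', y', z'b - 1) : Cube) (C.erase (x, y, z'b - 1))).erase (x, y, z'b) :=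
      hQD hB'Q
    have hA'D : ((x', y', z'b - 1) : Cube) ∈
        (insert ((x', y', z'b - 1) : Cube) (C.erase (x, y, z'b - 1))).erase (x, y, z'b) :=
      Finset.mem_erase.mpr ⟨cube_ne_lit (by omega), Finset.mem_insert_self _ _⟩
    have hDconn : Conn
        ((insert ((x', y', z'b - 1) : Cube) (C.erase (x, y, z'b - 1))).erase (x, y, z'b)) := by
      set D := (insert ((x', y', z'b - 1) : Cube) (C.erase (x, y, z'b - 1))).erase (x, y, z'b)
        with hDdef
      have hhub : ∀ d ∈ D, (gph D).Reachable d (x', y', z'b) := by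
        intro d hd
        obtain ⟨hdB, hdC1⟩ := Finset.mem_erase.mp hd
        rcases Finset.mem_insert.mp hdC1 with rfl | hdC1
        · exact SimpleGraph.Adj.reachable ⟨hd, hB'D, cubeAdj_lit.mpr (by omega)⟩
        · obtain ⟨hdA, hdC⟩ := Finset.mem_erase.mp hdC1
          by_cases hdP : d ∈ pillarSet x y zb zt
          · obtain ⟨dx, dy, dz⟩ := d
            obtain ⟨e1, e2, e3, e4⟩ := mem_pillarSet'.mp hdP
            replace e1 : x = dx := e1.symm
            replace e2 : y = dy := e2.symm
            subst e1; subst e2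
            have hdz1 : dz ≠ z'b - 1 := fun h => hdA (cube_lit_eq_iff.mpr ⟨rfl, rfl, h⟩)
            have hdz2 : dz ≠ z'b := fun h => hdB (cube_lit_eq_iff.mpr ⟨rfl, rfl, h⟩)
            rcases lt_or_ge dz z'b with hlt | hge
            · -- in the lower part L
              obtain ⟨p, hpL, q, hqC, hqP, hpq⟩ := hLexit dz e3 (by omega)
              have hLD : pillarSet x y zb (z'b - 2) ⊆ D := by
                intro l hl
                obtain ⟨f1, f2, f3, f4⟩ := mem_pillarSet.mp hl
                refine Finset.mem_erase.mpr ⟨fun h => ?_,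
                  Finset.mem_insert_of_mem (Finset.mem_erase.mpr ⟨fun h => ?_,
                    hPsub (pillarSet_mono le_rfl (by omega) hl)⟩)⟩
                · have := (cube_eq_lit.mp h).2.2; omega
                · have := (cube_eq_lit.mp h).2.2; omega
              have hqD : q ∈ D := hQD (Finset.mem_sdiff.mpr ⟨hqC, hqP⟩)
              have hr1 := reach_mono hLD ((conn_pillar (show zb ≤ z'b - 2 by omega)).2 _
                (mk_mem_pillarSet e3 (by omega)) p hpL)
              have hr2 : (gph D).Reachable p q :=
                SimpleGraph.Adj.reachable ⟨hLD hpL, hqD, hpq⟩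
              exact hr1.trans (hr2.trans (reach_mono hQD
                (hQconn.2 q (Finset.mem_sdiff.mpr ⟨hqC, hqP⟩) _ hB'Q)))
            · -- in the upper part U
              have hdz3 : z'b + 1 ≤ dz := by omega
              rcases hUQ with ⟨u, huU, q, hqQ, huq⟩ | hzt
              · have hUD : pillarSet x y (z'b + 1) zt ⊆ D := by
                  intro l hl
                  obtain ⟨f1, f2, f3, f4⟩ := mem_pillarSet.mp hl
                  refine Finset.mem_erase.mpr ⟨fun h => ?_,
                    Finset.mem_insert_of_mem (Finset.mem_erase.mpr ⟨fun h => ?_,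
                      hPsub (pillarSet_mono (by omega) le_rfl hl)⟩)⟩
                  · have := (cube_eq_lit.mp h).2.2; omega
                  · have := (cube_eq_lit.mp h).2.2; omega
                have hr1 := reach_mono hUD ((conn_pillar (show z'b + 1 ≤ zt by omega)).2 _
                  (mk_mem_pillarSet hdz3 e4) u huU)
                have hr2 : (gph D).Reachable u q :=
                  SimpleGraph.Adj.reachable ⟨hUD huU, hQD hqQ, huq⟩
                exact hr1.trans (hr2.trans (reach_mono hQD (hQconn.2 q hqQ _ hB'Q)))
              · exact absurd e4 (by omega)
          · exact reach_mono hQD (hQconn.2 d (Finset.mem_sdiff.mpr ⟨hdC, hdP⟩) _ hB'Q)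
      exact ⟨⟨_, hB'D⟩, fun a ha b hb => (hhub a ha).trans (hhub b hb).symm⟩
    have hstep2 : MoveStep (insert (x', y', z'b - 1) (C.erase (x, y, z'b - 1)))
        (insert (x, y, z'b - 1)
          ((insert (x', y', z'b - 1) (C.erase (x, y, z'b - 1))).erase (x, y, z'b))) := by
      refine ⟨(x, y, z'b), (x, y, z'b - 1),
        ⟨Or.inl ⟨hBC1, hAC1, (x', y', z'b - 1), (x', y', z'b), ?_,
          Finset.mem_insert_self _ _, Finset.mem_insert_of_mem hB'e⟩, hDconn⟩, rfl⟩
      exact ⟨cubeAdj_lit.mpr (by omega), cubeAdj_lit.mpr (by omega),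
        cubeAdj_lit.mpr (by omega), cubeAdj_lit.mpr (by omega),
        cube_ne_lit (by omega), cube_ne_lit (by omega)⟩
    have hC2conn : Conn (insert (x, y, z'b - 1)
        ((insert (x', y', z'b - 1) (C.erase (x, y, z'b - 1))).erase (x, y, z'b))) :=
      conn_insert hDconn hA'D (cubeAdj_lit.mpr (by omega))
    refine ⟨2, _, by omega, moveSeq_cons hstep1 hC1conn (moveSeq_single hstep2 hC2conn), ?_, ?_⟩
    · rw [zsum_move' hBC1 hAC1, zsum_move' hA hA'n]; ring
    · intro hN
      have hx' : (0:ℤ) ≤ x' := (hN _ hB').1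
      have hy' : (0:ℤ) ≤ y' := (hN _ hB').2.1
      have hx : (0:ℤ) ≤ x := (hN _ hA).1
      have hy : (0:ℤ) ≤ y := (hN _ hA).2.1
      have hzb : (0:ℤ) ≤ zb := (hN _ hBzb).2.2
      exact nonneg_move' (nonneg_move' hN hx' hy' (by omega)) hx hy (by omega)
  · -- no adjacency between the upper part and the rest, and zt > z'b
    have hnot := not_or.mp hUQ
    obtain ⟨hnoUQ, hztne⟩ := hnot
    push_neg at hnoUQ
    have hzt1 : z'b + 1 ≤ zt := by omega
    have hQU' : ∀ q : Cube, q ∈ C → q ∉ pillarSet x y zb zt → ∀ dz : ℤ,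
        z'b + 1 ≤ dz → dz ≤ zt → ¬ cubeAdj (x, y, dz) q :=
      fun q hq hqP dz h1 h2 =>
        hnoUQ _ (mk_mem_pillarSet h1 h2) q (Finset.mem_sdiff.mpr ⟨hq, hqP⟩)
    by_cases hzt2 : zt = z'b + 1
    · -- CASE 2b : three moves
      have hT1n : ((x', y', zt) : Cube) ∉ C := fun h =>
        hQU' _ h (fun hm => by obtain ⟨e1, e2, -⟩ := mem_pillarSet'.mp hm; omega)
          zt hzt1 le_rfl (cubeAdj_lit.mpr (by omega))
      have hTC1 : ((x, y, zt) : Cube) ∈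
          insert ((x', y', z'b - 1) : Cube) (C.erase (x, y, z'b - 1)) :=
        Finset.mem_insert_of_mem (Finset.mem_erase.mpr ⟨cube_ne_lit (by omega), hT⟩)
      have hT1C1 : ((x', y', zt) : Cube) ∉
          insert ((x', y', z'b - 1) : Cube) (C.erase (x, y, z'b - 1)) := by
        rw [Finset.mem_insert]
        rintro (h | h)
        · exact cube_ne_lit (by omega) h
        · exact hT1n (Finset.mem_of_mem_erase h)
      have hB'C1 : ((x', y', z'b) : Cube) ∈
          insert ((x', y', z'b - 1) : Cube) (C.erase (x, y, z'b - 1)) :=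
        Finset.mem_insert_of_mem hB'e
      have huniq : ∀ a ∈ insert ((x', y', z'b - 1) : Cube) (C.erase (x, y, z'b - 1)),
          cubeAdj a (x, y, zt) → a = (x, y, z'b) := by
        intro a haC1 hadjT
        rcases Finset.mem_insert.mp haC1 with rfl | h
        · rw [cubeAdj_lit] at hadjT; omega
        · obtain ⟨haA, haC⟩ := Finset.mem_erase.mp h
          obtain ⟨ax, ay, az⟩ := a
          rw [cubeAdj_lit] at hadjT
          by_cases hax : ax = x ∧ ay = y
          · obtain ⟨rfl, rfl⟩ := hax
            have : az = zt - 1 ∨ az = zt + 1 := by omega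
            rcases this with rfl | rfl
            · exact cube_lit_eq_iff.mpr ⟨rfl, rfl, by omega⟩
            · exact absurd haC hPtop
          · exact absurd (cubeAdj_lit.mpr (by omega)) (hQU' _ haC
              (fun hm => by obtain ⟨e1, e2, -⟩ := mem_pillarSet'.mp hm; exact hax ⟨e1, e2⟩)
              zt hzt1 le_rfl)
      have hleaf : Conn
          ((insert ((x', y', z'b - 1) : Cube) (C.erase (x, y, z'b - 1))).erase (x, y, zt)) :=
        erase_leaf hC1conn hTC1 hBC1 (cube_ne_lit (by omega)) huniq
      have hstep2 : MoveStep (insert (x', y', z'b - 1) (C.erase (x, y, z'b - 1)))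
          (insert (x', y', zt)
            ((insert (x', y', z'b - 1) (C.erase (x, y, z'b - 1))).erase (x, y, zt))) := by
        refine ⟨(x, y, zt), (x', y', zt),
          ⟨Or.inl ⟨hTC1, hT1C1, (x', y', z'b), (x, y, z'b), ?_, hB'C1, hBC1⟩, hleaf⟩, rfl⟩
        exact ⟨cubeAdj_lit.mpr (by omega), cubeAdj_lit.mpr (by omega),
          cubeAdj_lit.mpr (by omega), cubeAdj_lit.mpr (by omega),
          cube_ne_lit (by omega), cube_ne_lit (by omega)⟩
      have hB'C2' : ((x', y', z'b) : Cube) ∈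
          (insert ((x', y', z'b - 1) : Cube) (C.erase (x, y, z'b - 1))).erase (x, y, zt) :=
        Finset.mem_erase.mpr ⟨cube_ne_lit (by omega), hB'C1⟩
      have hC2conn : Conn (insert (x', y', zt)
          ((insert ((x', y', z'b - 1) : Cube) (C.erase (x, y, z'b - 1))).erase (x, y, zt))) :=
        conn_insert hleaf hB'C2' (cubeAdj_lit.mpr (by omega))
      -- abbreviate C2
      set C2 : Finset Cube := insert ((x', y', zt) : Cube)
        ((insert ((x', y', z'b - 1) : Cube) (C.erase (x, y, z'b - 1))).erase (x, y, zt))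
        with hC2def
      have hBC2 : ((x, y, z'b) : Cube) ∈ C2 :=
        Finset.mem_insert_of_mem (Finset.mem_erase.mpr ⟨cube_ne_lit (by omega), hBC1⟩)
      have hAC2 : ((x, y, z'b - 1) : Cube) ∉ C2 := by
        rw [hC2def, Finset.mem_insert]
        rintro (h | h)
        · exact cube_ne_lit (by omega) h
        · exact hAC1 (Finset.mem_of_mem_erase h)
      have hA'C2 : ((x', y', z'b - 1) : Cube) ∈ C2 :=
        Finset.mem_insert_of_mem
          (Finset.mem_erase.mpr ⟨cube_ne_lit (by omega), Finset.mem_insert_self _ _⟩)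
      have hB'C2 : ((x', y', z'b) : Cube) ∈ C2 := Finset.mem_insert_of_mem hB'C2'
      have hQD2 : C \ pillarSet x y zb zt ⊆ C2.erase (x, y, z'b) := by
        intro q hq
        obtain ⟨hqC, hqP⟩ := Finset.mem_sdiff.mp hq
        refine Finset.mem_erase.mpr ⟨fun h => hqP (by rw [h]; exact hBP),
          Finset.mem_insert_of_mem (Finset.mem_erase.mpr
            ⟨fun h => hqP (by rw [h]; exact hTP),
              Finset.mem_insert_of_mem (Finset.mem_erase.mpr
                ⟨fun h => hqP (by rw [h]; exact hAP), hqC⟩)⟩)⟩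
      have hB'D2 : ((x', y', z'b) : Cube) ∈ C2.erase (x, y, z'b) := hQD2 hB'Q
      have hD2conn : Conn (C2.erase (x, y, z'b)) := by
        have hhub : ∀ d ∈ C2.erase (x, y, z'b),
            (gph (C2.erase (x, y, z'b))).Reachable d (x', y', z'b) := by
          intro d hd
          obtain ⟨hdB, hdC2⟩ := Finset.mem_erase.mp hd
          rw [hC2def, Finset.mem_insert] at hdC2
          rcases hdC2 with rfl | hdC2
          · exact SimpleGraph.Adj.reachable ⟨hd, hB'D2, cubeAdj_lit.mpr (by omega)⟩
          · obtain ⟨hdT, hdC1⟩ := Finset.mem_erase.mp hdC2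
            rcases Finset.mem_insert.mp hdC1 with rfl | hdC1
            · exact SimpleGraph.Adj.reachable ⟨hd, hB'D2, cubeAdj_lit.mpr (by omega)⟩
            · obtain ⟨hdA, hdC⟩ := Finset.mem_erase.mp hdC1
              by_cases hdP : d ∈ pillarSet x y zb zt
              · obtain ⟨dx, dy, dz⟩ := d
                obtain ⟨e1, e2, e3, e4⟩ := mem_pillarSet'.mp hdP
                replace e1 : x = dx := e1.symm
                replace e2 : y = dy := e2.symm
                subst e1; subst e2
                have hdz1 : dz ≠ z'b - 1 := fun h => hdA (cube_lit_eq_iff.mpr ⟨rfl, rfl, h⟩)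
                have hdz2 : dz ≠ z'b := fun h => hdB (cube_lit_eq_iff.mpr ⟨rfl, rfl, h⟩)
                have hdz3 : dz ≠ zt := fun h => hdT (cube_lit_eq_iff.mpr ⟨rfl, rfl, h⟩)
                have hdz4 : dz ≤ z'b - 2 := by omega
                obtain ⟨p, hpL, q, hqC, hqP, hpq⟩ := hLexit dz e3 hdz4
                have hLD : pillarSet x y zb (z'b - 2) ⊆ C2.erase (x, y, z'b) := by
                  intro l hl
                  obtain ⟨f1, f2, f3, f4⟩ := mem_pillarSet.mp hl
                  refine Finset.mem_erase.mpr ⟨fun h => ?_,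
                    Finset.mem_insert_of_mem (Finset.mem_erase.mpr ⟨fun h => ?_,
                      Finset.mem_insert_of_mem (Finset.mem_erase.mpr ⟨fun h => ?_,
                        hPsub (pillarSet_mono le_rfl (by omega) hl)⟩)⟩)⟩
                  · have := (cube_eq_lit.mp h).2.2; omega
                  · have := (cube_eq_lit.mp h).2.2; omega
                  · have := (cube_eq_lit.mp h).2.2; omega
                have hqD : q ∈ C2.erase (x, y, z'b) := hQD2 (Finset.mem_sdiff.mpr ⟨hqC, hqP⟩)
                have hr1 := reach_mono hLD ((conn_pillar (show zb ≤ z'b - 2 by omega)).2 _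
                  (mk_mem_pillarSet e3 hdz4) p hpL)
                have hr2 : (gph (C2.erase (x, y, z'b))).Reachable p q :=
                  SimpleGraph.Adj.reachable ⟨hLD hpL, hqD, hpq⟩
                exact hr1.trans (hr2.trans (reach_mono hQD2
                  (hQconn.2 q (Finset.mem_sdiff.mpr ⟨hqC, hqP⟩) _ hB'Q)))
              · exact reach_mono hQD2 (hQconn.2 d (Finset.mem_sdiff.mpr ⟨hdC, hdP⟩) _ hB'Q)
        exact ⟨⟨_, hB'D2⟩, fun a ha b hb => (hhub a ha).trans (hhub b hb).symm⟩
      have hstep3 : MoveStep C2 (insert (x, y, z'b - 1) (C2.erase (x, y, z'b))) := by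
        refine ⟨(x, y, z'b), (x, y, z'b - 1),
          ⟨Or.inl ⟨hBC2, hAC2, (x', y', z'b - 1), (x', y', z'b), ?_, hA'C2, hB'C2⟩,
            hD2conn⟩, rfl⟩
        exact ⟨cubeAdj_lit.mpr (by omega), cubeAdj_lit.mpr (by omega),
          cubeAdj_lit.mpr (by omega), cubeAdj_lit.mpr (by omega),
          cube_ne_lit (by omega), cube_ne_lit (by omega)⟩
      have hA'D2 : ((x', y', z'b - 1) : Cube) ∈ C2.erase (x, y, z'b) :=
        Finset.mem_erase.mpr ⟨cube_ne_lit (by omega), hA'C2⟩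
      have hC3conn : Conn (insert (x, y, z'b - 1) (C2.erase (x, y, z'b))) :=
        conn_insert hD2conn hA'D2 (cubeAdj_lit.mpr (by omega))
      refine ⟨3, _, le_rfl,
        moveSeq_cons hstep1 hC1conn (moveSeq_cons hstep2 hC2conn
          (moveSeq_single hstep3 hC3conn)), ?_, ?_⟩
      · rw [zsum_move' hBC2 hAC2, hC2def, zsum_move' hTC1 hT1C1, zsum_move' hA hA'n]; ring
      · intro hN
        have hx' : (0:ℤ) ≤ x' := (hN _ hB').1
        have hy' : (0:ℤ) ≤ y' := (hN _ hB').2.1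
        have hx : (0:ℤ) ≤ x := (hN _ hA).1
        have hy : (0:ℤ) ≤ y := (hN _ hA).2.1
        have hzb : (0:ℤ) ≤ zb := (hN _ hBzb).2.2
        rw [hC2def]
        exact nonneg_move' (nonneg_move' (nonneg_move' hN hx' hy' (by omega)) hx' hy'
          (by omega)) hx hy (by omega)
    · -- CASE 2a : one move, a convex transition of the top cube
      have hzt3 : z'b + 2 ≤ zt := by omega
      have hq1 : ((x + 1, y, zt - 1) : Cube) ∉ C := fun h =>
        hQU' _ h (fun hm => by obtain ⟨e1, -⟩ := mem_pillarSet'.mp hm; omega)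
          (zt - 1) (by omega) (by omega) (cubeAdj_lit.mpr (by omega)) 
      have hq2 : ((x + 1, y, zt) : Cube) ∉ C := fun h =>
        hQU' _ h (fun hm => by obtain ⟨e1, -⟩ := mem_pillarSet'.mp hm; omega)
          zt (by omega) le_rfl (cubeAdj_lit.mpr (by omega))
      have hb1 : ((x, y, zt - 1) : Cube) ∈ C := hPsub (mk_mem_pillarSet (by omega) (by omega))
      have huniq : ∀ a ∈ C, cubeAdj a (x, y, zt) → a = (x, y, zt - 1) := by
        intro a haC hadjT
        obtain ⟨ax, ay, az⟩ := a
        rw [cubeAdj_lit] at hadjT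
        by_cases hax : ax = x ∧ ay = y
        · obtain ⟨rfl, rfl⟩ := hax
          have : az = zt - 1 ∨ az = zt + 1 := by omega
          rcases this with rfl | rfl
          · rfl
          · exact absurd haC hPtop
        · exact absurd (cubeAdj_lit.mpr (by omega)) (hQU' _ haC
            (fun hm => by obtain ⟨e1, e2, -⟩ := mem_pillarSet'.mp hm; exact hax ⟨e1, e2⟩)
            zt hzt1 le_rfl)
      have hleaf : Conn (C.erase (x, y, zt)) :=
        erase_leaf hC hT hb1 (cube_ne_lit (by omega)) huniq
      have hstep : MoveStep C (insert (x + 1, y, zt - 1) (C.erase (x, y, zt))) := by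
        refine ⟨(x, y, zt), (x + 1, y, zt - 1),
          ⟨Or.inr ⟨hT, hq1, (x, y, zt - 1), (x + 1, y, zt), ?_, Or.inl ⟨hb1, hq2⟩⟩, hleaf⟩, rfl⟩
        exact ⟨cubeAdj_lit.mpr (by omega), cubeAdj_lit.mpr (by omega),
          cubeAdj_lit.mpr (by omega), cubeAdj_lit.mpr (by omega),
          cube_ne_lit (by omega), cube_ne_lit (by omega)⟩
      have hconn' : Conn (insert (x + 1, y, zt - 1) (C.erase (x, y, zt))) :=
        conn_insert hleaf (Finset.mem_erase.mpr ⟨cube_ne_lit (by omega), hb1⟩)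
          (cubeAdj_lit.mpr (by omega))
      refine ⟨1, _, by omega, moveSeq_single hstep hconn', ?_, ?_⟩
      · rw [zsum_move' hT hq1]; ring
      · intro hN
        have hx : (0:ℤ) ≤ x := (hN _ hA).1
        have hy : (0:ℤ) ≤ y := (hN _ hA).2.1
        have hzb : (0:ℤ) ≤ zb := (hN _ hBzb).2.2
        exact nonneg_move' hN (by omega) hy (by omega)
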